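/- For every s > s₀: s² − 2Ω(p) > 0 for all p ∈ [0,1]; the function p ↦ H(p;s) is a strictly increasing C¹ bijection from [0,1] onto [0, d(s)]; and its inverse U = U(·;s) : [0, d(s)] → [0,1] is twice continuously differentiable and satisfies U''(y) + ω(U(y)) = 0 on [0, d(s)], U(0) = 0, U(d(s)) = 1, U'(0) = s, and U'(y) > 0 for all y ∈ [0, d(s)]. -/

import Mathlib

open MeasureTheory Set Filter

noncomputable section

/-- `Omeg ω p = ∫₀^p ω(t) dt`, the primitive of the vorticity function. -/
def Omeg (ω : ℝ → ℝ) (p : ℝ) : ℝ := ∫ t in (0:ℝ)..p, ω t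

/-- `s0 ω = sqrt (max_{p ∈ [0,1]} 2 Ω(p))`. -/
def s0 (ω : ℝ → ℝ) : ℝ := Real.sqrt (sSup ((fun p => 2 * Omeg ω p) '' Icc (0:ℝ) 1))

/-- `Hp ω p s = (s² − 2Ω(p))^{-1/2}`. -/
def Hp (ω : ℝ → ℝ) (p s : ℝ) : ℝ := (Real.sqrt (s ^ 2 - 2 * Omeg ω p))⁻¹

/-- `Hfun ω p s = H(p; s) = ∫₀^p (s² − 2Ω(τ))^{-1/2} dτ`. -/
def Hfun (ω : ℝ → ℝ) (p s : ℝ) : ℝ := ∫ τ in (0:ℝ)..p, Hp ω τ s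

/-- `dd ω s = d(s) = H(1; s)`. -/
def dd (ω : ℝ → ℝ) (s : ℝ) : ℝ := Hfun ω 1 s

/-- `RR ω s = R(s) = s²/2 − Ω(1) + d(s)`, the Bernoulli constant of the stream solution. -/
def RR (ω : ℝ → ℝ) (s : ℝ) : ℝ := s ^ 2 / 2 - Omeg ω 1 + dd ω s

/-- `sigmaFun ω s r = σ(s; r)`. -/
def sigmaFun (ω : ℝ → ℝ) (s r : ℝ) : ℝ :=
  ∫ p in (0:ℝ)..1,
    (1 / (2 * (Hp ω p s) ^ 2) - Hfun ω p s - Omeg ω p + Omeg ω 1 + r) * Hp ω p s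

/-- Partial derivative in the first (horizontal) variable `q`. -/
def dq (f : ℝ → ℝ → ℝ) (q p : ℝ) : ℝ := deriv (fun x => f x p) q

/-- Partial derivative in the second (vertical) variable `p`. -/
def dp (f : ℝ → ℝ → ℝ) (q p : ℝ) : ℝ := deriv (fun y => f q y) p

/-- The height system with Bernoulli constant `r` on the strip `S = ℝ × [0,1]`. -/
structure HeightSol (ω : ℝ → ℝ) (r : ℝ) (h : ℝ → ℝ → ℝ) : Prop where
  smooth : ContDiff ℝ 2 (Function.uncurry h)
  hp_pos : ∀ q : ℝ, ∀ p ∈ Icc (0:ℝ) 1, 0 < dp h q p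
  pde : ∀ q : ℝ, ∀ p ∈ Icc (0:ℝ) 1,
    (1 + (dq h q p) ^ 2) / (dp h q p) ^ 2 * dp (dp h) q p
      - 2 * (dq h q p) / (dp h q p) * dp (dq h) q p
      + dq (dq h) q p - ω p * dp h q p = 0
  top : ∀ q : ℝ, (1 + (dq h q 1) ^ 2) / (2 * (dp h q 1) ^ 2) + h q 1 = r
  bot : ∀ q : ℝ, h q 0 = 0

/-- The flow force of a height function `h`, computed on the vertical line through `q`. -/
def flowForce (ω : ℝ → ℝ) (r : ℝ) (h : ℝ → ℝ → ℝ) (q : ℝ) : ℝ :=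
  ∫ p in (0:ℝ)..1,
    ((1 - (dq h q p) ^ 2) / (2 * (dp h q p) ^ 2) - h q p - Omeg ω p + Omeg ω 1 + r) * dp h q p

/-- `wfun ω s h = w^{(s)} = h − H(·; s)`. -/
def wfun (ω : ℝ → ℝ) (s : ℝ) (h : ℝ → ℝ → ℝ) (q p : ℝ) : ℝ := h q p - Hfun ω p s

/-- The flow force flux function `Φ^{(s)}`. -/
def Phi (ω : ℝ → ℝ) (s : ℝ) (h : ℝ → ℝ → ℝ) (q p : ℝ) : ℝ :=
  ∫ p' in (0:ℝ)..p,
    ((dp (wfun ω s h) q p') ^ 2 / (dp h q p' * (Hp ω p' s) ^ 2)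
      - (dq (wfun ω s h) q p') ^ 2 / dp h q p')

/-- `h ∈ C^{2,γ}(S̄)`: `h` is twice continuously differentiable, all partial derivatives of
order ≤ 2 are bounded on the strip, and the second-order derivatives are uniformly
γ-Hölder continuous on the strip. -/
def C2Holder (γ : ℝ) (h : ℝ → ℝ → ℝ) : Prop :=
  ContDiff ℝ 2 (Function.uncurry h) ∧
  (∀ g ∈ ([h, dq h, dp h, dq (dq h), dp (dq h), dp (dp h)] : List (ℝ → ℝ → ℝ)),
    ∃ M : ℝ, ∀ q : ℝ, ∀ p ∈ Icc (0:ℝ) 1, |g q p| ≤ M) ∧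
  (∀ g ∈ ([dq (dq h), dp (dq h), dp (dp h)] : List (ℝ → ℝ → ℝ)),
    ∃ C : ℝ, ∀ q q' : ℝ, ∀ p ∈ Icc (0:ℝ) 1, ∀ p' ∈ Icc (0:ℝ) 1,
      |g q p - g q' p'| ≤ C * Real.sqrt ((q - q') ^ 2 + (p - p') ^ 2) ^ γ)

end

/-! As `2Ω ≤ s₀² < s²` on `[0,1]`, the quantity `s² − 2Ω` stays positive on a slightly larger
closed interval. There `H(·;s)` has the positive continuous derivative `H_p = (s² − 2Ω)^{-1/2}`,
so it is strictly increasing, with a differentiable inverse `U` on a neighbourhood of `[0, d(s)]`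
and `U' = 1 / H_p(U) = √(s² − 2Ω(U))`. Differentiating once more,
`U'' = −Ω'(U) U' / √(s² − 2Ω(U)) = −ω(U)`. -/

open Topology Metric Function

lemma exists_Icc_superset_subset_of_isOpen {V : Set ℝ} (hV : IsOpen V) {c d : ℝ} (hcd : c ≤ d)
    (h : Icc c d ⊆ V) : ∃ a b, a < c ∧ d < b ∧ Icc a b ⊆ V := by
  rw [Real.Icc_eq_closedBall] at h
  obtain ⟨δ, hδ, hsub⟩ := (isCompact_closedBall _ _).exists_cthickening_subset_open hV h
  rw [cthickening_closedBall hδ.le (by linarith), Real.closedBall_eq_Icc] at hsub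
  exact ⟨_, _, by linarith, by linarith, hsub⟩

section InverseOnIcc

variable {f f' : ℝ → ℝ} {a b : ℝ}

lemma strictMonoOn_Icc_of_hasDerivAt_pos (hd : ∀ x ∈ Icc a b, HasDerivAt f (f' x) x)
    (hpos : ∀ x ∈ Icc a b, 0 < f' x) : StrictMonoOn f (Icc a b) :=
  strictMonoOn_of_hasDerivWithinAt_pos (convex_Icc a b)
    (fun x hx => (hd x hx).continuousAt.continuousWithinAt)
    (fun x hx => (hd x (interior_subset hx)).hasDerivWithinAt)
    (fun x hx => hpos x (interior_subset hx))

lemma StrictMonoOn.bijOn_Icc (hab : a ≤ b) (hf : StrictMonoOn f (Icc a b))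
    (hc : ContinuousOn f (Icc a b)) : BijOn f (Icc a b) (Icc (f a) (f b)) :=
  hc.image_Icc_of_monotoneOn hab hf.monotoneOn ▸ hf.injOn.bijOn_image

lemma hasDerivAt_invFunOn_Icc (hab : a ≤ b) (hd : ∀ x ∈ Icc a b, HasDerivAt f (f' x) x)
    (hpos : ∀ x ∈ Icc a b, 0 < f' x) {y : ℝ} (hy : y ∈ Ioo (f a) (f b)) :
    HasDerivAt (invFunOn f (Icc a b)) (f' (invFunOn f (Icc a b) y))⁻¹ y := by
  set g := invFunOn f (Icc a b)
  have hf := strictMonoOn_Icc_of_hasDerivAt_pos hd hpos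
  have hbij := hf.bijOn_Icc hab fun x hx => (hd x hx).continuousAt.continuousWithinAt
  have hinv : InvOn g f (Icc a b) (Icc (f a) (f b)) := hbij.invOn_invFunOn
  have hg_mem : MapsTo g (Icc (f a) (f b)) (Icc a b) := hbij.surjOn.mapsTo_invFunOn
  have hg_mono : MonotoneOn g (Icc (f a) (f b)) := fun y₁ h₁ y₂ h₂ hle =>
    (hf.le_iff_le (hg_mem h₁) (hg_mem h₂)).1 (by rwa [hinv.2 h₁, hinv.2 h₂])
  have hyIcc := Ioo_subset_Icc_self hy
  have hgy : g y ∈ Ioo a b := by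
    rw [← hinv.2 hyIcc] at hy
    exact ⟨(hf.lt_iff_lt (left_mem_Icc.2 hab) (hg_mem hyIcc)).1 hy.1,
      (hf.lt_iff_lt (hg_mem hyIcc) (right_mem_Icc.2 hab)).1 hy.2⟩
  have hg_cont : ContinuousAt g y := by
    refine continuousAt_of_monotoneOn_of_image_mem_nhds hg_mono (Icc_mem_nhds hy.1 hy.2) ?_
    rw [(hbij.symm hinv.symm).image_eq]
    exact Icc_mem_nhds hgy.1 hgy.2
  refine HasDerivAt.of_local_left_inverse hg_cont (hd _ (hg_mem hyIcc))
    (hpos _ (hg_mem hyIcc)).ne' ?_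
  filter_upwards [Icc_mem_nhds hy.1 hy.2] with z hz using hinv.2 hz

end InverseOnIcc

lemma hasDerivAt_sqrt_const_sub_two_mul_comp {Φ U : ℝ → ℝ} {φ c y : ℝ}
    (hΦ : HasDerivAt Φ φ (U y)) (hU : HasDerivAt U (√(c - 2 * Φ (U y))) y)
    (hpos : 0 < c - 2 * Φ (U y)) :
    HasDerivAt (fun z => √(c - 2 * Φ (U z))) (-φ) y := by
  refine ((((hΦ.comp y hU).const_mul 2).const_sub c).sqrt hpos.ne').congr_deriv ?_
  rw [comp_apply]
  field_simp

section Vorticity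

variable {ω : ℝ → ℝ} {s : ℝ}

lemma Omeg_zero (ω : ℝ → ℝ) : Omeg ω 0 = 0 := intervalIntegral.integral_same

lemma hasDerivAt_Omeg (hω : Continuous ω) (x : ℝ) : HasDerivAt (Omeg ω) (ω x) x :=
  intervalIntegral.integral_hasDerivAt_right (hω.intervalIntegrable 0 x)
    (hω.stronglyMeasurableAtFilter _ _) hω.continuousAt

@[fun_prop]
lemma continuous_Omeg (hω : Continuous ω) : Continuous (Omeg ω) :=
  continuous_iff_continuousAt.2 fun x => (hasDerivAt_Omeg hω x).continuousAt

lemma sq_sub_two_mul_Omeg_pos (hω : Continuous ω) (hs : s0 ω < s) {p : ℝ} (hp : p ∈ Icc 0 1) :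
    0 < s ^ 2 - 2 * Omeg ω p := by
  have hbdd : BddAbove ((fun p => 2 * Omeg ω p) '' Icc (0:ℝ) 1) :=
    (isCompact_Icc.image (by fun_prop)).bddAbove
  have hsup := (Real.sqrt_lt' ((Real.sqrt_nonneg _).trans_lt hs)).1 hs
  linarith [le_csSup hbdd (mem_image_of_mem _ hp)]

lemma continuousAt_Hp (hω : Continuous ω) {p : ℝ} (hp : 0 < s ^ 2 - 2 * Omeg ω p) :
    ContinuousAt (fun τ => Hp ω τ s) p :=
  (by fun_prop : Continuous fun τ => √(s ^ 2 - 2 * Omeg ω τ)).continuousAt.inv₀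
    (Real.sqrt_pos.2 hp).ne'

lemma Hp_pos {p : ℝ} (hp : 0 < s ^ 2 - 2 * Omeg ω p) : 0 < Hp ω p s :=
  inv_pos.2 (Real.sqrt_pos.2 hp)

lemma Hfun_zero (ω : ℝ → ℝ) (s : ℝ) : Hfun ω 0 s = 0 := intervalIntegral.integral_same

variable {a b : ℝ}

lemma hasDerivAt_Hfun_of_mem_Icc (hω : Continuous ω) (h0 : (0:ℝ) ∈ Icc a b)
    (hF : ∀ p ∈ Icc a b, 0 < s ^ 2 - 2 * Omeg ω p) {x : ℝ} (hx : x ∈ Icc a b) :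
    HasDerivAt (fun p => Hfun ω p s) (Hp ω x s) x := by
  have hV : IsOpen {p | 0 < s ^ 2 - 2 * Omeg ω p} := isOpen_lt continuous_const (by fun_prop)
  have hxV := hF x hx
  exact intervalIntegral.integral_hasDerivAt_right
    (ContinuousOn.intervalIntegrable fun p hp =>
      (continuousAt_Hp hω (hF p (uIcc_subset_Icc h0 hx hp))).continuousWithinAt)
    (ContinuousAt.stronglyMeasurableAtFilter hV (fun p hp => continuousAt_Hp hω hp) x hxV)
    (continuousAt_Hp hω hxV)

lemma strictMonoOn_Hfun (hω : Continuous ω) (h0 : (0:ℝ) ∈ Icc a b)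
    (hF : ∀ p ∈ Icc a b, 0 < s ^ 2 - 2 * Omeg ω p) :
    StrictMonoOn (fun p => Hfun ω p s) (Icc a b) :=
  strictMonoOn_Icc_of_hasDerivAt_pos (fun _ => hasDerivAt_Hfun_of_mem_Icc hω h0 hF)
    fun x hx => Hp_pos (hF x hx)

lemma hasDerivAt_invFunOn_Hfun (hω : Continuous ω) (ha : a < 0) (hb : 1 < b)
    (hF : ∀ p ∈ Icc a b, 0 < s ^ 2 - 2 * Omeg ω p) {y : ℝ} (hy : y ∈ Icc 0 (dd ω s)) :
    HasDerivAt (invFunOn (fun p => Hfun ω p s) (Icc a b))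
      (√(s ^ 2 - 2 * Omeg ω (invFunOn (fun p => Hfun ω p s) (Icc a b) y))) y := by
  have h0 : (0:ℝ) ∈ Icc a b := ⟨ha.le, by linarith⟩
  have h1 : (1:ℝ) ∈ Icc a b := ⟨by linarith, hb.le⟩
  have hmono := strictMonoOn_Hfun hω h0 hF
  have ha0 : Hfun ω a s < 0 := Hfun_zero ω s ▸ hmono (left_mem_Icc.2 (by linarith)) h0 ha
  have h1b : dd ω s < Hfun ω b s := hmono h1 (right_mem_Icc.2 (by linarith)) hb
  simpa only [Hp, inv_inv] using hasDerivAt_invFunOn_Icc (by linarith)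
    (fun _ => hasDerivAt_Hfun_of_mem_Icc hω h0 hF) (fun x hx => Hp_pos (hF x hx))
    ⟨ha0.trans_le hy.1, hy.2.trans_lt h1b⟩

end Vorticity

/-- for every `s > s₀`, `s² − 2Ω(p) > 0` on `[0,1]`, `H(·;s)` is a strictly
increasing `C¹` bijection from `[0,1]` onto `[0, d(s)]`, and its inverse `U` is twice
continuously differentiable with `U'' + ω(U) = 0`, `U(0)=0`, `U(d(s))=1`, `U'(0)=s` and
`U' > 0` on `[0, d(s)]`. -/
theorem stmt1 (ω : ℝ → ℝ) (hω : Continuous ω) (s : ℝ) (hs : s0 ω < s) :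
    (∀ p ∈ Icc (0:ℝ) 1, 0 < s ^ 2 - 2 * Omeg ω p) ∧
    StrictMonoOn (fun p => Hfun ω p s) (Icc (0:ℝ) 1) ∧
    (∀ p ∈ Icc (0:ℝ) 1, HasDerivAt (fun p' => Hfun ω p' s) (Hp ω p s) p) ∧
    ContinuousOn (fun p => Hp ω p s) (Icc (0:ℝ) 1) ∧
    BijOn (fun p => Hfun ω p s) (Icc (0:ℝ) 1) (Icc (0:ℝ) (dd ω s)) ∧
    ∃ U U' U'' : ℝ → ℝ,
      (∀ y ∈ Icc (0:ℝ) (dd ω s), U y ∈ Icc (0:ℝ) 1 ∧ Hfun ω (U y) s = y) ∧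
      (∀ y ∈ Icc (0:ℝ) (dd ω s), HasDerivAt U (U' y) y) ∧
      (∀ y ∈ Icc (0:ℝ) (dd ω s), HasDerivAt U' (U'' y) y) ∧
      ContinuousOn U'' (Icc (0:ℝ) (dd ω s)) ∧
      (∀ y ∈ Icc (0:ℝ) (dd ω s), U'' y + ω (U y) = 0) ∧
      U 0 = 0 ∧ U (dd ω s) = 1 ∧ U' 0 = s ∧
      (∀ y ∈ Icc (0:ℝ) (dd ω s), 0 < U' y) := by
  have hpos : ∀ p ∈ Icc (0:ℝ) 1, 0 < s ^ 2 - 2 * Omeg ω p :=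
    fun p hp => sq_sub_two_mul_Omeg_pos hω hs hp
  have h0 : (0:ℝ) ∈ Icc (0:ℝ) 1 := left_mem_Icc.2 zero_le_one
  have hd := fun p (hp : p ∈ Icc (0:ℝ) 1) => hasDerivAt_Hfun_of_mem_Icc hω h0 hpos hp
  have hbij : BijOn (fun p => Hfun ω p s) (Icc 0 1) (Icc 0 (dd ω s)) := by
    simpa only [Hfun_zero, dd] using (strictMonoOn_Hfun hω h0 hpos).bijOn_Icc zero_le_one
      fun x hx => (hd x hx).continuousAt.continuousWithinAt
  obtain ⟨a, b, ha, hb, hF⟩ := exists_Icc_superset_subset_of_isOpen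
    (V := {p | 0 < s ^ 2 - 2 * Omeg ω p}) (isOpen_lt continuous_const (by fun_prop))
    zero_le_one hpos
  set U := invFunOn (fun p => Hfun ω p s) (Icc a b)
  have hUH : ∀ x ∈ Icc (0:ℝ) 1, U (Hfun ω x s) = x := fun x hx =>
    (strictMonoOn_Hfun hω ⟨ha.le, by linarith⟩ hF).injOn.leftInvOn_invFunOn
      (Icc_subset_Icc ha.le hb.le hx)
  have hU : ∀ y ∈ Icc 0 (dd ω s), U y ∈ Icc 0 1 ∧ Hfun ω (U y) s = y := by
    rw [← hbij.image_eq]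
    rintro _ ⟨x, hx, rfl⟩
    rw [hUH x hx]
    exact ⟨hx, rfl⟩
  have hU' := fun y (hy : y ∈ Icc 0 (dd ω s)) => hasDerivAt_invFunOn_Hfun hω ha hb hF hy
  have hU0 : U 0 = 0 := by simpa only [Hfun_zero] using hUH 0 h0
  refine ⟨hpos, strictMonoOn_Hfun hω h0 hpos, hd,
    fun p hp => (continuousAt_Hp hω (hpos p hp)).continuousWithinAt, hbij,
    U, fun y => √(s ^ 2 - 2 * Omeg ω (U y)), fun y => -ω (U y), hU, hU',
    fun y hy => hasDerivAt_sqrt_const_sub_two_mul_comp (hasDerivAt_Omeg hω _) (hU' y hy)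
      (hpos _ (hU y hy).1),
    fun y hy => (hω.continuousAt.comp (hU' y hy).continuousAt).neg.continuousWithinAt,
    fun y _ => neg_add_cancel _, hU0, hUH 1 (right_mem_Icc.2 zero_le_one), ?_,
    fun y hy => Real.sqrt_pos.2 (hpos _ (hU y hy).1)⟩
  show √(s ^ 2 - 2 * Omeg ω (U 0)) = s
  rw [hU0, Omeg_zero, mul_zero, sub_zero, Real.sqrt_sq ((Real.sqrt_nonneg _).trans hs.le)]
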